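/- Let A be an artin algebra with Jacobson radical J, and suppose every module P(i)J (the radical of the indecomposable projective P(i)) lies in add(⊕_{j=1}^m A/J^j), where m is the Loewy length of A. Then for every i and every 1 ≤ j ≤ m, the module P(i)J/P(i)J^j also lies in add(⊕_{j=1}^m A/J^j). In particular, if P(i)J ≅ P(k)/P(k)J^l, then P(i)J/P(i)J^j ≅ P(k)/P(k)J^j. -/

import Mathlib

/-!
The functor `M ↦ M / M Jʲ` preserves isomorphisms and finite direct sums, so it maps `add M`
into `add (M / M Jʲ)`. For `M = ⊕_{l=1}^m A/Jˡ` the module `M / M Jʲ` is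
`⊕_{l=1}^m A/J^{min j l}`, whose summands are again summands of `M`. Hence `add M` is closed
under `X ↦ X / X Jʲ`; apply this to `X = P J`.
-/

/-- The Jacobson radical of a ring `A`. -/
def jacobsonRad (A : Type) [Ring A] : Ideal A := Ideal.jacobson ⊥

/-- The submodule `I • N` (span of products), valid over noncommutative rings. -/
def smulSub {A : Type} [Ring A] (I : Ideal A) {M : Type} [AddCommGroup M] [Module A M]
    (N : Submodule A M) : Submodule A M :=
  Submodule.span A {x | ∃ a ∈ I, ∃ y ∈ N, x = a • y}

/-- `radPow A M n` is the submodule `M J(A)^n` (written for left modules: `J(A)^n M`). -/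
def radPow (A : Type) [Ring A] (M : Type) [AddCommGroup M] [Module A M] : ℕ → Submodule A M
  | 0 => ⊤
  | n + 1 => smulSub (jacobsonRad A) (radPow A M n)

lemma radPow_succ_le (A : Type) [Ring A] (M : Type) [AddCommGroup M] [Module A M] (n : ℕ) :
    radPow A M (n + 1) ≤ radPow A M n := by
  show smulSub (jacobsonRad A) (radPow A M n) ≤ radPow A M n
  rw [smulSub, Submodule.span_le]
  rintro x ⟨a, _, y, hy, rfl⟩
  exact Submodule.smul_mem _ a hy

lemma radPow_le_one (A : Type) [Ring A] (M : Type) [AddCommGroup M] [Module A M]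
    {j : ℕ} (hj : 1 ≤ j) : radPow A M j ≤ radPow A M 1 := by
  induction j with
  | zero => omega
  | succ n ih =>
    rcases Nat.lt_or_ge 1 (n+1) with h | h
    · exact le_trans (radPow_succ_le A M n) (ih (by omega))
    · have : n + 1 = 1 := by omega
      rw [this]

/-- `X` belongs to `add M`: it is a direct summand of a finite direct sum of copies of `M`. -/
def InAdd (A : Type) [Ring A] (M : Type) [AddCommGroup M] [Module A M]
    (X : Type) [AddCommGroup X] [Module A X] : Prop :=
  ∃ (n : ℕ) (Y : Type) (_ : AddCommGroup Y) (_ : Module A Y),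
    Nonempty ((X × Y) ≃ₗ[A] (Fin n → M))

/-- `f` lies in the Jacobson radical of the category of `A`-modules. -/
def IsRadMor (A : Type) [Ring A] {M N : Type} [AddCommGroup M] [Module A M]
    [AddCommGroup N] [Module A N] (f : M →ₗ[A] N) : Prop :=
  ∀ g : N →ₗ[A] M, IsUnit ((1 : Module.End A M) - (g ∘ₗ f : Module.End A M))

/-- The ADR module `⊕_{j=1}^m A/J^j`. -/
abbrev ADRModule (A : Type) [Ring A] (m : ℕ) : Type :=
  ∀ j : Fin m, A ⧸ radPow A A (j.1 + 1)

open Function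

section RadicalFiltration

variable {A : Type} [Ring A] {M N : Type} [AddCommGroup M] [Module A M] [AddCommGroup N]
  [Module A N]

lemma smulSub_mono (I : Ideal A) {p q : Submodule A M} (h : p ≤ q) :
    smulSub I p ≤ smulSub I q := by
  apply Submodule.span_mono
  rintro x ⟨a, ha, y, hy, rfl⟩
  exact ⟨a, ha, y, h hy, rfl⟩

lemma map_smulSub (I : Ideal A) (f : M →ₗ[A] N) (p : Submodule A M) :
    (smulSub I p).map f = smulSub I (p.map f) := by
  rw [smulSub, smulSub, Submodule.map_span]
  congr 1
  ext x
  constructor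
  · rintro ⟨y, ⟨a, ha, z, hz, rfl⟩, rfl⟩
    exact ⟨a, ha, f z, ⟨z, hz, rfl⟩, f.map_smul a z⟩
  · rintro ⟨a, ha, y, ⟨z, hz, rfl⟩, rfl⟩
    exact ⟨a • z, ⟨a, ha, z, hz, rfl⟩, f.map_smul a z⟩

lemma radPow_antitone : Antitone (radPow A M) :=
  antitone_nat_of_succ_le (radPow_succ_le A M)

lemma radPow_sup_radPow (j l : ℕ) : radPow A M j ⊔ radPow A M l = radPow A M (min j l) := by
  rcases le_total j l with h | h
  · rw [min_eq_left h, sup_eq_left.mpr (radPow_antitone h)]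
  · rw [min_eq_right h, sup_eq_right.mpr (radPow_antitone h)]

lemma map_radPow_le (f : M →ₗ[A] N) (j : ℕ) : (radPow A M j).map f ≤ radPow A N j := by
  induction j with
  | zero => exact le_top
  | succ n ih =>
    rw [radPow, radPow, map_smulSub]
    exact smulSub_mono _ ih

lemma map_radPow_of_surjective {f : M →ₗ[A] N} (hf : Surjective f) (j : ℕ) :
    (radPow A M j).map f = radPow A N j := by
  induction j with
  | zero => rw [radPow, radPow, Submodule.map_top, LinearMap.range_eq_top.mpr hf]
  | succ n ih => rw [radPow, radPow, map_smulSub, ih]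

lemma radPow_pi {ι : Type} [Fintype ι] [DecidableEq ι] (M : ι → Type)
    [∀ i, AddCommGroup (M i)] [∀ i, Module A (M i)] (j : ℕ) :
    radPow A (∀ i, M i) j = Submodule.pi Set.univ fun i => radPow A (M i) j := by
  apply le_antisymm
  · intro x hx
    rw [Submodule.mem_pi]
    intro i _
    exact map_radPow_le (LinearMap.proj i) j ⟨x, hx, rfl⟩
  · intro x hx
    rw [Submodule.mem_pi] at hx
    rw [← Finset.univ_sum_single x]
    refine Submodule.sum_mem _ fun i _ => ?_
    exact map_radPow_le (LinearMap.single A M i) j ⟨x i, hx i (Set.mem_univ i), rfl⟩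

lemma radPow_prod (j : ℕ) : radPow A (M × N) j = (radPow A M j).prod (radPow A N j) := by
  apply le_antisymm
  · intro x hx
    exact ⟨map_radPow_le (LinearMap.fst A M N) j ⟨x, hx, rfl⟩,
      map_radPow_le (LinearMap.snd A M N) j ⟨x, hx, rfl⟩⟩
  · rintro ⟨x, y⟩ ⟨hx, hy⟩
    have hx' : ((x, 0) : M × N) ∈ radPow A (M × N) j :=
      map_radPow_le (LinearMap.inl A M N) j ⟨x, hx, rfl⟩
    have hy' : ((0, y) : M × N) ∈ radPow A (M × N) j :=
      map_radPow_le (LinearMap.inr A M N) j ⟨y, hy, rfl⟩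
    simpa using Submodule.add_mem _ hx' hy'

noncomputable def quotRadPowCongr (e : M ≃ₗ[A] N) (j : ℕ) :
    (M ⧸ radPow A M j) ≃ₗ[A] N ⧸ radPow A N j :=
  Submodule.Quotient.equiv _ _ e (map_radPow_of_surjective e.surjective j)

noncomputable def quotRadPowPi {ι : Type} [Fintype ι] [DecidableEq ι] (M : ι → Type)
    [∀ i, AddCommGroup (M i)] [∀ i, Module A (M i)] (j : ℕ) :
    ((∀ i, M i) ⧸ radPow A (∀ i, M i) j) ≃ₗ[A] ∀ i, M i ⧸ radPow A (M i) j :=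
  let f := LinearMap.pi fun i => (radPow A (M i) j).mkQ ∘ₗ LinearMap.proj i
  have hf : Surjective f := fun y => by
    choose x hx using fun i => (radPow A (M i) j).mkQ_surjective (y i)
    exact ⟨x, funext hx⟩
  have hker : LinearMap.ker f = radPow A (∀ i, M i) j := by
    ext x
    simp [f, radPow_pi, Submodule.mem_pi, funext_iff]
  (Submodule.quotEquivOfEq _ _ hker.symm).trans (f.quotKerEquivOfSurjective hf)

noncomputable def quotRadPowProd (j : ℕ) :
    ((M × N) ⧸ radPow A (M × N) j) ≃ₗ[A] (M ⧸ radPow A M j) × (N ⧸ radPow A N j) :=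
  let f := (radPow A M j).mkQ.prodMap (radPow A N j).mkQ
  have hker : LinearMap.ker f = radPow A (M × N) j := by
    rw [radPow_prod, LinearMap.ker_prodMap, Submodule.ker_mkQ, Submodule.ker_mkQ]
  (Submodule.quotEquivOfEq _ _ hker.symm).trans
    (f.quotKerEquivOfSurjective
      ((Submodule.mkQ_surjective _).prodMap (Submodule.mkQ_surjective _)))

/-- `(M / M Jˡ) / (M / M Jˡ) Jʲ ≃ (M / M Jˡ) / (M Jʲ / M Jˡ) ≃ M / M J^(min j l)`. -/
noncomputable def quotRadPowQuotRadPow (l j : ℕ) :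
    ((M ⧸ radPow A M l) ⧸ radPow A (M ⧸ radPow A M l) j) ≃ₗ[A]
      M ⧸ radPow A M (min j l) :=
  (Submodule.quotEquivOfEq _ _
      (map_radPow_of_surjective (radPow A M l).mkQ_surjective j).symm).trans <|
    (Submodule.quotientQuotientEquivQuotientSup _ _).trans <|
      Submodule.quotEquivOfEq _ _ (by rw [sup_comm, radPow_sup_radPow])

end RadicalFiltration

namespace InAdd

variable {A : Type} [Ring A] {M N X X' : Type} [AddCommGroup M] [Module A M] [AddCommGroup N]
  [Module A N] [AddCommGroup X] [Module A X] [AddCommGroup X'] [Module A X']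

lemma of_linearEquiv (h : InAdd A M X) (e : X ≃ₗ[A] X') : InAdd A M X' := by
  obtain ⟨n, Y, _, _, ⟨f⟩⟩ := h
  exact ⟨n, Y, _, _, ⟨(e.symm.prodCongr (LinearEquiv.refl A Y)).trans f⟩⟩

lemma of_subsingleton [Subsingleton X] : InAdd A M X :=
  ⟨0, PUnit, inferInstance, inferInstance, ⟨LinearEquiv.ofSubsingleton _ _⟩⟩

lemma of_prod_left {Y : Type} [AddCommGroup Y] [Module A Y] (e : (X × Y) ≃ₗ[A] N)
    (h : InAdd A M N) : InAdd A M X := by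
  obtain ⟨n, W, _, _, ⟨f⟩⟩ := h
  exact ⟨n, Y × W, inferInstance, inferInstance,
    ⟨(LinearEquiv.prodAssoc A X Y W).symm.trans
      ((e.prodCongr (LinearEquiv.refl A W)).trans f)⟩⟩

lemma pi {ι : Type} [Fintype ι] {X : ι → Type} [∀ i, AddCommGroup (X i)]
    [∀ i, Module A (X i)] (h : ∀ i, InAdd A M (X i)) : InAdd A M (∀ i, X i) := by
  choose n Y _ _ e using h
  let prodPi : ((∀ i, X i) × ∀ i, Y i) ≃ₗ[A] ∀ i, X i × Y i :=
    { (Equiv.arrowProdEquivProdArrow ι X Y).symm with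
      map_add' := fun _ _ => rfl
      map_smul' := fun _ _ => rfl }
  refine ⟨Fintype.card (Σ i, Fin (n i)), ∀ i, Y i, inferInstance, inferInstance, ⟨?_⟩⟩
  exact prodPi.trans <| (LinearEquiv.piCongrRight fun i => (e i).some).trans <|
    (LinearEquiv.piCurry A fun _ _ => M).symm.trans <|
      LinearEquiv.funCongrLeft A M (Fintype.equivFin _).symm

lemma trans (hN : InAdd A M N) (hX : InAdd A N X) : InAdd A M X := by
  obtain ⟨n, Y, _, _, ⟨e⟩⟩ := hX
  exact of_prod_left e (pi fun _ => hN)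

lemma pi_component {ι : Type} [DecidableEq ι] (M : ι → Type) [∀ i, AddCommGroup (M i)]
    [∀ i, Module A (M i)] (i : ι) : InAdd A (∀ i, M i) (M i) := by
  let split : (∀ i, M i) ≃ₗ[A] M i × ∀ k : { k // k ≠ i }, M k :=
    { Equiv.piSplitAt i M with
      map_add' := fun _ _ => rfl
      map_smul' := fun _ _ => rfl }
  exact ⟨1, _, inferInstance, inferInstance,
    ⟨split.symm.trans (LinearEquiv.funUnique _ A _).symm⟩⟩

lemma quot_radPow (h : InAdd A M X) (j : ℕ) :
    InAdd A (M ⧸ radPow A M j) (X ⧸ radPow A X j) := by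
  obtain ⟨n, Y, _, _, ⟨e⟩⟩ := h
  exact ⟨n, Y ⧸ radPow A Y j, inferInstance, inferInstance,
    ⟨(quotRadPowProd j).symm.trans <| (quotRadPowCongr e j).trans <| quotRadPowPi _ j⟩⟩

end InAdd

section ADRModule

variable {A : Type} [Ring A]

lemma inAdd_ADRModule_of_le {k m : ℕ} (hk : k ≤ m) :
    InAdd A (ADRModule A m) (A ⧸ radPow A A k) := by
  cases k with
  | zero =>
    have : Subsingleton (A ⧸ radPow A A 0) := Submodule.Quotient.subsingleton_iff.mpr rfl
    exact InAdd.of_subsingleton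
  | succ k => exact InAdd.pi_component _ (⟨k, hk⟩ : Fin m)

lemma inAdd_ADRModule_quot_radPow (m j : ℕ) :
    InAdd A (ADRModule A m) (ADRModule A m ⧸ radPow A (ADRModule A m) j) :=
  InAdd.of_linearEquiv
    (InAdd.pi fun l : Fin m => inAdd_ADRModule_of_le ((min_le_right j _).trans l.isLt))
    ((LinearEquiv.piCongrRight fun l : Fin m =>
        quotRadPowQuotRadPow ((l : ℕ) + 1) j).symm.trans
      (quotRadPowPi (fun l : Fin m => A ⧸ radPow A A ((l : ℕ) + 1)) j).symm)

end ADRModule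

theorem stmt3_general (A : Type) [Ring A] (m : ℕ)
    (h : ∀ (P : Type) [AddCommGroup P] [Module A P], Module.Projective A P →
      Module.Finite A P → InAdd A (ADRModule A m) ↥(radPow A P 1)) :
    ∀ (P : Type) [AddCommGroup P] [Module A P], Module.Projective A P → Module.Finite A P →
      ∀ j : ℕ, 1 ≤ j → j ≤ m →
        InAdd A (ADRModule A m) (↥(radPow A P 1) ⧸ radPow A (↥(radPow A P 1)) j) := by
  intro P _ _ hproj hfin j _ _
  exact (inAdd_ADRModule_quot_radPow m j).trans ((h P hproj hfin).quot_radPow j)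

/-- if the radical of every (finitely generated) projective `P` lies in
`add(⊕_{j=1}^m A/J^j)`, then so does every `PJ/(PJ)J^j` for `1 ≤ j ≤ m`. -/
theorem stmt3 (K : Type) [Field K] (A : Type) [Ring A] [Algebra K A] [FiniteDimensional K A]
    (m : ℕ) (hm : 1 ≤ m) (hA : radPow A A m = ⊥) (hA' : radPow A A (m - 1) ≠ ⊥)
    (h : ∀ (P : Type) [AddCommGroup P] [Module A P], Module.Projective A P →
      Module.Finite A P → InAdd A (ADRModule A m) ↥(radPow A P 1)) :
    ∀ (P : Type) [AddCommGroup P] [Module A P], Module.Projective A P → Module.Finite A P →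
      ∀ j : ℕ, 1 ≤ j → j ≤ m →
        InAdd A (ADRModule A m) (↥(radPow A P 1) ⧸ radPow A (↥(radPow A P 1)) j) :=
  stmt3_general A m h
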